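/- arXiv:math/0608678 — 3 statements merged into one kernel-verified Lean document; each statement's English description precedes it below -/
import Mathlib

section
/- Let u, v be Lyndon words with u < v, |u| ≥ 2, and let (u₁, u₂) be the Shirshov decomposition of u. Then exactly one of the following holds: (1) the Shirshov decomposition of uv is (u, v) and u₂ ≥ v; or (2) u₂ < v and the Shirshov decomposition of uv is (u₁', u₁''u₂v) for some factorization u₁ = u₁'u₁'' (with u₁'' possibly empty). -/
/-- A nonempty word `u` over a totally ordered alphabet is a Lyndon word if for every
factorization `u = u₁ ++ u₂` into nonempty words one has `u < u₂` lexicographically. -/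
def IsLyndon {α : Type*} [LinearOrder α] (u : List α) : Prop :=
  u ≠ [] ∧ ∀ u₁ u₂ : List α, u₁ ≠ [] → u₂ ≠ [] → u = u₁ ++ u₂ → u < u₂

/-- `ShirshovDecomp u v w` means `u = v ++ w` where `w` is the longest proper right factor of
`u` which is a Lyndon word (and `v` is nonempty). -/
def ShirshovDecomp {α : Type*} [LinearOrder α] (u v w : List α) : Prop :=
  u = v ++ w ∧ v ≠ [] ∧ w ≠ [] ∧ IsLyndon w ∧
    ∀ w' : List α, w' <:+ u → w' ≠ u → IsLyndon w' → w'.length ≤ w.length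

/-!
The key fact is that the longest proper Lyndon suffix `u₂` of `u` is also its lexicographically
least proper nonempty suffix: the least one is Lyndon, hence a suffix of `u₂`, and it cannot be
a proper suffix of the Lyndon word `u₂`. If `v ≤ u₂`, a proper Lyndon suffix of `uv` longer than
`v` would be `sv` with `s` a proper suffix of `u`; then `v ≤ u₂ ≤ s` gives `v < sv`, contradicting
that `sv` is Lyndon. If `u₂ < v`, then `u₂v` is a proper Lyndon suffix of `uv`, so the longest one
contains it and has the form `u₁''u₂v` with `u₁''` a suffix of `u₁`.
-/

namespace List

variable {α : Type*}

theorem IsSuffix.length_lt_of_ne {l₁ l₂ : List α} (h : l₁ <:+ l₂) (hne : l₁ ≠ l₂) :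
    l₁.length < l₂.length :=
  lt_of_le_of_ne h.length_le (mt h.eq_of_length hne)

theorem IsSuffix.exists_eq_append_of_length_le {w l₁ l₂ : List α} (hw : w <:+ l₁ ++ l₂)
    (h : l₂.length ≤ w.length) : ∃ s, s <:+ l₁ ∧ w = s ++ l₂ := by
  obtain ⟨s, rfl⟩ := suffix_of_suffix_length_le (suffix_append l₁ l₂) hw h
  exact ⟨s, suffix_append_self_iff.1 hw, rfl⟩

theorem finite_setOf_isSuffix (u : List α) : {s | s <:+ u}.Finite :=
  u.tails.finite_toSet.subset fun s hs => (mem_tails s u).2 hs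

theorem lt_append_of_ne_nil [LT α] (l : List α) {t : List α} (ht : t ≠ []) : l < l ++ t := by
  obtain ⟨a, t, rfl⟩ := exists_cons_of_ne_nil ht
  simpa using append_left_lt (l₁ := l) (nil_lt_cons a t)

theorem append_lt_append_of_not_prefix [LT α] {s t : List α} (h : s < t) (hp : ¬s <+: t)
    (a b : List α) : s ++ a < t ++ b := by
  induction h with
  | nil => exact absurd nil_prefix hp
  | rel hxy => exact Lex.rel hxy
  | cons _ ih => exact Lex.cons (ih fun hpre => hp (cons_prefix_cons.2 ⟨rfl, hpre⟩))

theorem lt_append_of_le [LinearOrder α] {l₁ l₂ t : List α} (h : l₁ ≤ l₂) (ht : t ≠ []) :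
    l₁ < l₂ ++ t := by
  by_cases hp : l₁ <+: l₂
  · obtain ⟨r, rfl⟩ := hp
    rw [append_assoc]
    exact lt_append_of_ne_nil l₁ (by simp [ht])
  · have hlt : l₁ < l₂ := lt_of_le_of_ne h fun he => hp (he ▸ prefix_rfl)
    simpa using append_lt_append_of_not_prefix hlt hp [] t

end List

open List

section

variable {α : Type*} [LinearOrder α] {u v s : List α}

theorem isLyndon_iff :
    IsLyndon u ↔ u ≠ [] ∧ ∀ s, s <:+ u → s ≠ [] → s ≠ u → u < s := by
  refine ⟨fun ⟨hu, h⟩ => ⟨hu, fun s ⟨c, hc⟩ hs hsu => h c s ?_ hs hc.symm⟩,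
    fun ⟨hu, h⟩ => ⟨hu, fun a b ha hb hab => h b ⟨a, hab.symm⟩ hb ?_⟩⟩
  · rintro rfl
    exact hsu (by simpa using hc)
  · rintro rfl
    simp [ha] at hab

theorem IsLyndon.lt_of_isSuffix (hu : IsLyndon u) (hs : s <:+ u) (hne : s ≠ []) (hsu : s ≠ u) :
    u < s :=
  (isLyndon_iff.1 hu).2 s hs hne hsu

theorem IsLyndon.le_of_isSuffix (hu : IsLyndon u) (hs : s <:+ u) (hne : s ≠ []) : u ≤ s := by
  rcases eq_or_ne s u with rfl | hsu
  · exact le_rfl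
  · exact (hu.lt_of_isSuffix hs hne hsu).le

theorem IsLyndon.append_lt (hu : u ≠ []) (hv : IsLyndon v) (huv : u < v) : u ++ v < v := by
  by_cases hp : u <+: v
  · obtain ⟨t, rfl⟩ := hp
    have ht : t ≠ [] := by
      rintro rfl
      simp at huv
    have hlt : u ++ t < t := hv.2 u t hu ht rfl
    exact append_left_lt hlt
  · simpa using append_lt_append_of_not_prefix huv hp v []

theorem IsLyndon.append (hu : IsLyndon u) (hv : IsLyndon v) (huv : u < v) :
    IsLyndon (u ++ v) := by
  refine isLyndon_iff.2 ⟨by simp [hu.1], fun s hs hne hsu => ?_⟩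
  rcases le_or_gt s.length v.length with hle | hlt
  · have hsv : s <:+ v := suffix_of_suffix_length_le hs (suffix_append u v) hle
    exact (hv.append_lt hu.1 huv).trans_le (hv.le_of_isSuffix hsv hne)
  · obtain ⟨r, hr, rfl⟩ := hs.exists_eq_append_of_length_le hlt.le
    have hr₀ : r ≠ [] := by
      rintro rfl
      simp at hlt
    have hru : r ≠ u := by
      rintro rfl
      exact hsu rfl
    have hnp : ¬u <+: r := fun hp => (hr.length_lt_of_ne hru).not_ge hp.length_le
    exact append_lt_append_of_not_prefix (hu.lt_of_isSuffix hr hr₀ hru) hnp v v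

theorem isLyndon_of_isSuffix_of_forall_le {m : List α} (hm : m <:+ u) (hm₀ : m ≠ [])
    (hmin : ∀ s, s <:+ u → s ≠ [] → s ≠ u → m ≤ s) : IsLyndon m := by
  refine isLyndon_iff.2 ⟨hm₀, fun s hs hne hsm => lt_of_le_of_ne ?_ (Ne.symm hsm)⟩
  have hlen : s.length < u.length := (hs.length_lt_of_ne hsm).trans_le hm.length_le
  exact hmin s (hs.trans hm) hne (by rintro rfl; exact hlen.false)

theorem exists_shirshovDecomp {w : List α} (hw : w <:+ u) (hwu : w ≠ u) (hL : IsLyndon w) :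
    ∃ x y, ShirshovDecomp u x y ∧ w.length ≤ y.length := by
  obtain ⟨y, ⟨hy, hyu, hyL⟩, hmax⟩ :=
    Set.exists_max_image {y | y <:+ u ∧ y ≠ u ∧ IsLyndon y} length
      ((finite_setOf_isSuffix u).subset fun _ h => h.1) ⟨w, hw, hwu, hL⟩
  obtain ⟨x, rfl⟩ := hy
  refine ⟨x, y, ⟨rfl, ?_, hyL.1, hyL, fun w' h₁ h₂ h₃ => hmax w' ⟨h₁, h₂, h₃⟩⟩,
    hmax w ⟨hw, hwu, hL⟩⟩
  rintro rfl
  exact hyu rfl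

namespace ShirshovDecomp

variable {u₁ u₂ : List α}

theorem ne_nil (h : ShirshovDecomp u u₁ u₂) : u ≠ [] := by
  simp [h.1, h.2.1]

theorem lt_length (h : ShirshovDecomp u u₁ u₂) : u₂.length < u.length := by
  have := length_pos_iff.2 h.2.1
  simp [h.1, this]

theorem isSuffix (h : ShirshovDecomp u u₁ u₂) : u₂ <:+ u :=
  h.1 ▸ suffix_append u₁ u₂

theorem isLyndon (h : ShirshovDecomp u u₁ u₂) : IsLyndon u₂ :=
  h.2.2.2.1

theorem le_of_isSuffix (h : ShirshovDecomp u u₁ u₂) (hs : s <:+ u) (hne : s ≠ [])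
    (hsu : s ≠ u) : u₂ ≤ s := by
  have hu₂u : u₂ ≠ u := by rintro rfl; exact h.lt_length.false
  obtain ⟨m, ⟨hm, hm₀, hmu⟩, hmin⟩ :=
    Set.exists_min_image {s | s <:+ u ∧ s ≠ [] ∧ s ≠ u} id
      ((finite_setOf_isSuffix u).subset fun _ h => h.1) ⟨u₂, h.isSuffix, h.isLyndon.1, hu₂u⟩
  have hmL : IsLyndon m :=
    isLyndon_of_isSuffix_of_forall_le hm hm₀ fun s h₁ h₂ h₃ => hmin s ⟨h₁, h₂, h₃⟩
  have hmu₂ : m <:+ u₂ := suffix_of_suffix_length_le hm h.isSuffix (h.2.2.2.2 m hm hmu hmL)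
  have hm_eq : m = u₂ := by
    by_contra hne
    exact (h.isLyndon.lt_of_isSuffix hmu₂ hm₀ hne).not_ge (hmin u₂ ⟨h.isSuffix, h.isLyndon.1, hu₂u⟩)
  exact hm_eq ▸ hmin s ⟨hs, hne, hsu⟩

theorem append_of_le (h : ShirshovDecomp u u₁ u₂) (hv : IsLyndon v) (hle : v ≤ u₂) :
    ShirshovDecomp (u ++ v) u v := by
  refine ⟨rfl, h.ne_nil, hv.1, hv, fun w hw hwuv hwL => ?_⟩
  by_contra! hlt
  obtain ⟨s, hs, rfl⟩ := hw.exists_eq_append_of_length_le hlt.le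
  have hs₀ : s ≠ [] := by
    rintro rfl
    exact hlt.false
  have hsu : s ≠ u := by
    rintro rfl
    exact hwuv rfl
  have hvs : v < s ++ v := lt_append_of_le (hle.trans (h.le_of_isSuffix hs hs₀ hsu)) hv.1
  exact hvs.not_gt (hwL.2 s v hs₀ hv.1 rfl)

theorem append_of_lt (h : ShirshovDecomp u u₁ u₂) (hv : IsLyndon v) (hlt : u₂ < v) :
    ∃ u₁' u₁'', u₁ = u₁' ++ u₁'' ∧ ShirshovDecomp (u ++ v) u₁' (u₁'' ++ u₂ ++ v) := by
  have huv : u ++ v = u₁ ++ (u₂ ++ v) := by rw [h.1, append_assoc]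
  have hsuf : u₂ ++ v <:+ u ++ v := huv ▸ suffix_append u₁ (u₂ ++ v)
  have hne : u₂ ++ v ≠ u ++ v := fun heq => h.lt_length.ne (by simpa using congrArg length heq)
  obtain ⟨x, y, hxy, hlen⟩ := exists_shirshovDecomp hsuf hne (h.isLyndon.append hv hlt)
  obtain ⟨s, -, rfl⟩ := (huv ▸ hxy.isSuffix).exists_eq_append_of_length_le hlen
  refine ⟨x, s, append_cancel_right (bs := u₂ ++ v) ?_, by simpa only [append_assoc] using hxy⟩
  rw [← huv, hxy.1, append_assoc]

end ShirshovDecomp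

end

theorem shirshov_of_concat_general {α : Type*} [LinearOrder α] (u v u₁ u₂ : List α)
    (hv : IsLyndon v)
    (hSd : ShirshovDecomp u u₁ u₂) :
    Xor' (ShirshovDecomp (u ++ v) u v ∧ v ≤ u₂)
      (u₂ < v ∧ ∃ u₁' u₁'' : List α, u₁ = u₁' ++ u₁'' ∧
        ShirshovDecomp (u ++ v) u₁' (u₁'' ++ u₂ ++ v)) := by
  rcases le_or_gt v u₂ with hle | hlt
  · exact Or.inl ⟨⟨hSd.append_of_le hv hle, hle⟩, fun h => h.1.not_ge hle⟩
  · exact Or.inr ⟨⟨hlt, hSd.append_of_lt hv hlt⟩, fun h => hlt.not_ge h.2⟩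

/-- Let `u < v` be Lyndon words with `|u| ≥ 2` and Shirshov decomposition `u = u₁u₂`. Then
exactly one of the following holds: (1) the Shirshov decomposition of `uv` is `(u, v)` and
`u₂ ≥ v`; or (2) `u₂ < v` and the Shirshov decomposition of `uv` is `(u₁', u₁''u₂v)` for some
factorization `u₁ = u₁'u₁''` (with `u₁''` possibly empty). -/
theorem shirshov_of_concat {α : Type*} [LinearOrder α] (u v u₁ u₂ : List α)
    (hu : IsLyndon u) (hv : IsLyndon v) (huv : u < v) (hlen : 2 ≤ u.length)
    (hSd : ShirshovDecomp u u₁ u₂) :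
    Xor' (ShirshovDecomp (u ++ v) u v ∧ v ≤ u₂)
      (u₂ < v ∧ ∃ u₁' u₁'' : List α, u₁ = u₁' ++ u₁'' ∧
        ShirshovDecomp (u ++ v) u₁' (u₁'' ++ u₂ ++ v)) :=
  shirshov_of_concat_general u v u₁ u₂ hv hSd
end

section
/- Every nonempty word over a totally ordered alphabet can be written in a unique way as a product v₁v₂⋯vₙ of Lyndon words with v₁ ≥ v₂ ≥ ⋯ ≥ vₙ (a monotonic non-increasing factorization into Lyndon words). -/
section Aux

variable {α : Type*} [LinearOrder α]

/-- F2: a word is less than itself followed by a nonempty word. -/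
lemma lt_append_of_ne_nil (s : List α) {w : List α} (hw : w ≠ []) : s < s ++ w := by
  induction s with
  | nil =>
    cases w with
    | nil => exact absurd rfl hw
    | cons c w' => exact List.Lex.nil
  | cons a s ih => exact List.Lex.cons ih

/-- F1: a prefix is ≤. -/
lemma le_of_prefix {s t : List α} (h : s <+: t) : s ≤ t := by
  obtain ⟨w, rfl⟩ := h
  rcases eq_or_ne w [] with rfl | hw
  · simp
  · exact le_of_lt (lt_append_of_ne_nil s hw)

/-- F5: cancel a common prefix in a strict lex inequality. -/
lemma append_lt_append_iff (s x y : List α) : s ++ x < s ++ y ↔ x < y := by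
  induction s with
  | nil => rfl
  | cons a s ih =>
    show List.Lex _ (a :: (s ++ x)) (a :: (s ++ y)) ↔ _
    rw [List.lex_cons_iff]; exact ih

/-- F3: if `s < t` and `s` is not a prefix of `t`, appending anything preserves `<`. -/
lemma append_lt_append_of_not_prefix {s t : List α} (h : s < t) (hp : ¬ s <+: t) :
    ∀ w w' : List α, s ++ w < t ++ w' := by
  revert hp
  induction (h : List.Lex (· < ·) s t) with
  | nil => intro hp; exact absurd (List.nil_prefix) hp
  | @cons a l₁ l₂ h ih =>
    intro hp w w'
    refine List.Lex.cons (ih ?_ w w')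
    intro hpp; exact hp (List.cons_prefix_cons.mpr ⟨rfl, hpp⟩)
  | rel h => intro _ w w'; exact List.Lex.rel h

/-- L0: if `v` is Lyndon, `u` nonempty and `u < v`, then `u ++ v < v`. -/
lemma append_lt_self {u v : List α} (hv : IsLyndon v) (hu : u ≠ []) (huv : u < v) :
    u ++ v < v := by
  by_cases hp : u <+: v
  · obtain ⟨d, rfl⟩ := hp
    have hd : d ≠ [] := by rintro rfl; simp at huv
    have hvd : u ++ d < d := hv.2 u d hu hd rfl
    exact (append_lt_append_iff u _ _).mpr hvd
  · have := append_lt_append_of_not_prefix huv hp v []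
    simpa using this

/-- L1: concatenation of increasing Lyndon words is Lyndon. -/
lemma isLyndon_append {u v : List α} (hu : IsLyndon u) (hv : IsLyndon v) (huv : u < v) :
    IsLyndon (u ++ v) := by
  refine ⟨by simp [hu.1], ?_⟩
  intro u₁ u₂ h₁ h₂ heq
  rcases List.append_eq_append_iff.mp heq.symm with ⟨a, ha, hb⟩ | ⟨c, hc, hd⟩
  · -- u = u₁ ++ a, u₂ = a ++ v
    rcases eq_or_ne a [] with rfl | hα
    · simp only [List.append_nil] at ha; subst ha
      simp only [List.nil_append] at hb; subst hb
      exact append_lt_self hv hu.1 huv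
    · have hlt : u < a := hu.2 u₁ a h₁ hα ha
      have hnp : ¬ u <+: a := by
        intro hpp
        have := hpp.length_le
        have : u.length > a.length := by
          subst ha; simp
          exact List.length_pos_iff.mpr h₁
        omega
      rw [hb]
      exact append_lt_append_of_not_prefix hlt hnp v v
  · -- u₁ = u ++ c, v = c ++ u₂
    rcases eq_or_ne c [] with rfl | hc'
    · simp only [List.append_nil] at hc; subst hc
      simp only [List.nil_append] at hd; subst hd
      exact append_lt_self hv hu.1 huv
    · have hlt2 : v < u₂ := hv.2 c u₂ hc' h₂ hd
      exact lt_trans (append_lt_self hv hu.1 huv) hlt2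

/-- E: key lemma for uniqueness. If `v` is Lyndon and `t` is a nonempty proper suffix of `v`
which is a prefix of the flatten of a list of Lyndon words all `< v`, contradiction. -/
lemma suffix_prefix_aux {v : List α} (hv : IsLyndon v) :
    ∀ m : List (List α), (∀ x ∈ m, IsLyndon x) → (∀ x ∈ m, x < v) →
      ∀ t p : List α, t ≠ [] → p ≠ [] → v = p ++ t → t <+: m.flatten → False := by
  intro m
  induction m with
  | nil =>
    intro _ _ t p ht hp hv' hpre
    simp only [List.flatten_nil, List.prefix_nil] at hpre
    exact ht hpre
  | cons w m ih =>
    intro hlyn hlt t p ht hp hveq hpre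
    have hvt : v < t := hv.2 p t hp ht hveq
    simp only [List.flatten_cons] at hpre
    by_cases hle : t.length ≤ w.length
    · have htw : t <+: w :=
        List.prefix_of_prefix_length_le hpre (List.prefix_append w _) hle
      have : t ≤ w := le_of_prefix htw
      have : v < v := lt_trans (lt_of_lt_of_le hvt this) (hlt w (by simp))
      exact absurd this (lt_irrefl v)
    · have hwt : w <+: t :=
        List.prefix_of_prefix_length_le (List.prefix_append w _) hpre (by omega)
      obtain ⟨t', rfl⟩ := hwt
      have ht' : t' ≠ [] := by
        rintro rfl; simp at hle
      have hpre' : t' <+: m.flatten := by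
        rw [List.prefix_append_right_inj] at hpre; exact hpre
      exact ih (fun x hx => hlyn x (List.mem_cons_of_mem _ hx))
        (fun x hx => hlt x (List.mem_cons_of_mem _ hx))
        t' (p ++ w) ht' (by simp [hp]) (by rw [hveq, List.append_assoc]) hpre'

/-- C: any Lyndon prefix of a non-increasing Lyndon factorization is no longer
than the first factor. -/
lemma lyndon_prefix_length_le {v w : List α} {m : List (List α)}
    (hv : IsLyndon v) (hlyn : ∀ x ∈ w :: m, IsLyndon x)
    (hchain : List.Chain' (fun a b => b ≤ a) (w :: m))
    (hpre : v <+: (w :: m).flatten) : v.length ≤ w.length := by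
  by_contra hlen
  push_neg at hlen
  simp only [List.flatten_cons] at hpre
  have hwv : w <+: v :=
    List.prefix_of_prefix_length_le (List.prefix_append w _) hpre (by omega)
  obtain ⟨v', rfl⟩ := hwv
  have hv' : v' ≠ [] := by rintro rfl; simp at hlen
  have hw : w ≠ [] := (hlyn w (by simp)).1
  have hwlt : w < w ++ v' := lt_append_of_ne_nil w hv'
  have hall : ∀ x ∈ m, x < w ++ v' := by
    intro x hx
    have hpw : List.Pairwise (fun a b => b ≤ a) (w :: m) :=
      List.isChain_iff_pairwise.mp hchain
    exact lt_of_le_of_lt ((List.pairwise_cons.mp hpw).1 x hx) hwlt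
  have hpre' : v' <+: m.flatten := by
    rw [List.prefix_append_right_inj] at hpre; exact hpre
  exact suffix_prefix_aux hv m (fun x hx => hlyn x (List.mem_cons_of_mem _ hx))
    hall v' w hv' hw rfl hpre'

/-- Uniqueness of the non-increasing Lyndon factorization. -/
lemma lyndon_factorization_unique :
    ∀ l m : List (List α), (∀ x ∈ l, IsLyndon x) → List.Chain' (fun a b => b ≤ a) l →
      (∀ x ∈ m, IsLyndon x) → List.Chain' (fun a b => b ≤ a) m →
      l.flatten = m.flatten → l = m := by
  intro l
  induction l with
  | nil =>
    intro m _ _ hm _ hflat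
    have : m.flatten = [] := by rw [← hflat]; simp
    have : ∀ x ∈ m, x = [] := List.flatten_eq_nil_iff.mp this
    cases m with
    | nil => rfl
    | cons w m => exact absurd (this w (by simp)) (hm w (by simp)).1
  | cons v l ih =>
    intro m hl hcl hm hcm hflat
    cases m with
    | nil =>
      have : (v :: l).flatten = [] := by rw [hflat]; simp
      exact absurd (List.flatten_eq_nil_iff.mp this v (by simp)) (hl v (by simp)).1
    | cons w m =>
      have hvpre : v <+: (w :: m).flatten := by
        rw [← hflat]; simp only [List.flatten_cons]; exact List.prefix_append v _
      have hwpre : w <+: (v :: l).flatten := by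
        rw [hflat]; simp only [List.flatten_cons]; exact List.prefix_append w _
      have h1 : v.length ≤ w.length :=
        lyndon_prefix_length_le (hl v (by simp)) hm hcm hvpre
      have h2 : w.length ≤ v.length :=
        lyndon_prefix_length_le (hm w (by simp)) hl hcl hwpre
      have hvw : v = w := by
        have : v <+: w := by
          have : v <+: w ++ m.flatten := by simpa using hvpre
          exact List.prefix_of_prefix_length_le this (List.prefix_append w _) h1
        exact this.eq_of_length (le_antisymm h1 h2)
      subst hvw
      have hflat' : l.flatten = m.flatten := by
        simp only [List.flatten_cons] at hflat
        exact List.append_cancel_left hflat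
      have := ih m (fun x hx => hl x (List.mem_cons_of_mem _ hx)) hcl.tail
        (fun x hx => hm x (List.mem_cons_of_mem _ hx)) hcm.tail hflat'
      rw [this]

/-- Extract a violating adjacent pair from a non-chain. -/
lemma not_chain'_decomp {α' : Type*} {r : α' → α' → Prop} :
    ∀ l : List α', ¬ List.Chain' r l →
      ∃ l₁ a b l₂, l = l₁ ++ a :: b :: l₂ ∧ ¬ r a b := by
  intro l
  induction l with
  | nil => intro h; exact absurd List.isChain_nil h
  | cons a l ih =>
    intro h
    cases l with
    | nil => exact absurd (List.isChain_singleton a) h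
    | cons b l =>
      simp only [List.Chain'] at h; rw [List.isChain_cons_cons] at h
      push_neg at h
      by_cases hab : r a b
      · obtain ⟨l₁, x, y, l₂, heq, hxy⟩ := ih (h hab)
        exact ⟨a :: l₁, x, y, l₂, by rw [heq]; rfl, hxy⟩
      · exact ⟨[], a, b, l, rfl, hab⟩

/-- Existence: any Lyndon factorization can be turned into a non-increasing one. -/
lemma exists_nonincreasing (n : ℕ) :
    ∀ l : List (List α), l.length ≤ n → (∀ x ∈ l, IsLyndon x) →
      ∃ l' : List (List α), (∀ x ∈ l', IsLyndon x) ∧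
        List.Chain' (fun a b => b ≤ a) l' ∧ l'.flatten = l.flatten := by
  induction n with
  | zero =>
    intro l hlen _
    have : l = [] := List.length_eq_zero_iff.mp (Nat.le_zero.mp hlen)
    exact ⟨[], by simp, List.isChain_nil, by rw [this]⟩
  | succ n ih =>
    intro l hlen hlyn
    by_cases hc : List.Chain' (fun a b : List α => b ≤ a) l
    · exact ⟨l, hlyn, hc, rfl⟩
    · obtain ⟨l₁, a, b, l₂, rfl, hab⟩ := not_chain'_decomp l hc
      push_neg at hab
      have ha : IsLyndon a := hlyn a (by simp)
      have hb : IsLyndon b := hlyn b (by simp)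
      have hab' : a < b := hab
      have habL : IsLyndon (a ++ b) := isLyndon_append ha hb hab'
      have hlyn' : ∀ x ∈ l₁ ++ (a ++ b) :: l₂, IsLyndon x := by
        intro x hx
        simp only [List.mem_append, List.mem_cons] at hx
        rcases hx with hx | rfl | hx
        · exact hlyn x (by simp [hx])
        · exact habL
        · exact hlyn x (by simp [hx])
      have hlen' : (l₁ ++ (a ++ b) :: l₂).length ≤ n := by
        simp only [List.length_append, List.length_cons] at hlen ⊢
        omega
      obtain ⟨l', h1, h2, h3⟩ := ih _ hlen' hlyn'
      exact ⟨l', h1, h2, by rw [h3]; simp⟩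

end Aux

/-- Chen–Fox–Lyndon: every nonempty word can be written uniquely as a non-increasing
concatenation of Lyndon words. -/
theorem unique_lyndon_factorization {α : Type*} [LinearOrder α] (u : List α) (hu : u ≠ []) :
    ∃! l : List (List α),
      (∀ x ∈ l, IsLyndon x) ∧ List.Chain' (fun a b => b ≤ a) l ∧ l.flatten = u := by
  have hsing : ∀ x ∈ u.map (fun a => [a]), IsLyndon x := by
    intro x hx
    simp only [List.mem_map] at hx
    obtain ⟨a, _, rfl⟩ := hx
    refine ⟨by simp, ?_⟩
    intro u₁ u₂ h₁ h₂ heq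
    have : u₁.length + u₂.length = 1 := by
      have := congrArg List.length heq
      simp only [List.length_append, List.length_cons, List.length_nil] at this
      omega
    have := List.length_pos_iff.mpr h₁
    have := List.length_pos_iff.mpr h₂
    omega
  obtain ⟨l, h1, h2, h3⟩ := exists_nonincreasing (u.map (fun a => [a])).length
    (u.map (fun a => [a])) le_rfl hsing
  have hmapflat : ∀ w : List α, (w.map (fun a => [a])).flatten = w := by
    intro w; induction w with
    | nil => rfl
    | cons a w ihw => simp only [List.map_cons, List.flatten_cons, List.singleton_append, ihw]
  have hflat : l.flatten = u := by rw [h3, hmapflat]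
  refine ⟨l, ⟨h1, h2, hflat⟩, ?_⟩
  rintro m ⟨hm1, hm2, hm3⟩
  exact lyndon_factorization_unique m l hm1 hm2 h1 h2 (by rw [hm3, hflat])
end

section
/- Let u be a Lyndon word over the alphabet {1,…,d} and x a nonzero u-vector in TV (where V = V₁⊕⋯⊕V_d). Then the iterated bracket [x], defined via the Shirshov decomposition, has x as its leading vector: that is, [x] − x is a sum of w-vectors for words w of the same length with w > u lexicographically. -/
open TensorProduct

/-- For a word `u = a₁⋯aₘ` over the alphabet `ι`, the space of `u`-vectors
`V^u = V_{a₁}·V_{a₂}⋯V_{aₘ} ⊆ T` (the canonical image of `V_{a₁}⊗⋯⊗V_{aₘ}`). -/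
def Vword {k T ι : Type*} [CommSemiring k] [Semiring T] [Algebra k T]
    (V : ι → Submodule k T) (u : List ι) : Submodule k T :=
  (u.map V).prod

section Bracket

variable {k T ι : Type*} [Field k] [Ring T] [Algebra k T] [LinearOrder ι]

/-- `IsBracketing V cinv Br` says that the family of linear maps `Br u` is the iterated
bracketing `[·]` of `u`-vectors with respect to the inverse braiding `cinv`:
it is the identity on letters, it is given by the skew bracket
`[x,y] = xy − m∘c⁻¹(x⊗y)` of the two parts of the Shirshov decomposition on Lyndon words,
and it is multiplicative along the monotonic (Chen–Fox–Lyndon) factorization, whose first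
factor is the longest Lyndon prefix. -/
def IsBracketing (V : ι → Submodule k T) (cinv : T ⊗[k] T →ₗ[k] T ⊗[k] T)
    (Br : List ι → T →ₗ[k] T) : Prop :=
  (∀ x ∈ (1 : Submodule k T), Br [] x = x) ∧
  (∀ a : ι, ∀ x ∈ V a, Br [a] x = x) ∧
  (∀ u v w : List ι, IsLyndon u → ShirshovDecomp u v w →
    ∀ x ∈ Vword V v, ∀ y ∈ Vword V w,
      Br u (x * y) =
        (LinearMap.mul' k T - LinearMap.mul' k T ∘ₗ cinv) ((Br v x) ⊗ₜ (Br w y))) ∧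
  (∀ u v w : List ι, u = v ++ w → IsLyndon v → w ≠ [] →
    (∀ v' : List ι, v' <+: u → IsLyndon v' → v'.length ≤ v.length) →
    ∀ x ∈ Vword V v, ∀ y ∈ Vword V w, Br u (x * y) = Br v x * Br w y)

/-- The key property of the inverse braiding on `TV` induced by the Yetter–Drinfeld structure
of `V = ⊕ᵢ Vᵢ`: it maps `V^u ⊗ V^v` into `V^v ⊗ V^u`. -/
def BraidingCompat (V : ι → Submodule k T) (cinv : T ⊗[k] T →ₗ[k] T ⊗[k] T) : Prop :=
  ∀ u v : List ι, ∀ x,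
    x ∈ LinearMap.range (TensorProduct.map (Vword V u).subtype (Vword V v).subtype) →
      cinv x ∈ LinearMap.range (TensorProduct.map (Vword V v).subtype (Vword V u).subtype)

end Bracket

section AuxProof

lemma isLyndon_of_length_one {α : Type*} [LinearOrder α] {l : List α} (h : l.length = 1) :
    IsLyndon l := by
  refine ⟨by rintro rfl; simp at h, ?_⟩
  intro u₁ u₂ h1 h2 he
  exfalso
  rw [he, List.length_append] at h
  have := List.length_pos_iff.mpr h1
  have := List.length_pos_iff.mpr h2
  omega

lemma lex_append_of_lt {α : Type*} [LinearOrder α] {s t : List α} (h : s < t)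
    (hlen : s.length = t.length) (a b : List α) : s ++ a < t ++ b := by
  have h' : List.Lex (· < ·) s t := h
  clear h
  induction h' generalizing a b with
  | nil => simp at hlen
  | cons h ih =>
      show List.Lex (· < ·) _ _
      simp only [List.cons_append]
      exact List.Lex.cons (ih (by simpa using hlen) a b)
  | rel h =>
      show List.Lex (· < ·) _ _
      simp only [List.cons_append]
      exact List.Lex.rel h

lemma lex_append_left {α : Type*} [LinearOrder α] {t t' : List α} (h : t < t') (s : List α) :
    s ++ t < s ++ t' := by
  induction s with
  | nil => exact h
  | cons a s ih =>
      show List.Lex (· < ·) _ _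
      exact List.Lex.cons ih

lemma lt_append_of_lt {α : Type*} [LinearOrder α] {s t : List α} (h : s < t)
    (hlen : t.length < s.length) (a : List α) : s < t ++ a := by
  have h' : List.Lex (· < ·) s t := h
  clear h
  induction h' generalizing a with
  | nil => simp at hlen
  | cons h ih =>
      show List.Lex (· < ·) _ _
      exact List.Lex.cons (ih (by simpa using hlen) a)
  | rel h =>
      show List.Lex (· < ·) _ _
      simp only [List.cons_append]
      exact List.Lex.rel h

variable {k T ι : Type*} [Field k] [Ring T] [Algebra k T] [LinearOrder ι]


lemma Vword_append (V : ι → Submodule k T) (s t : List ι) :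
    Vword V (s ++ t) = Vword V s * Vword V t := by
  simp [Vword, List.prod_append]

lemma biSup_ind {A : Set (List ι)} {f : List ι → Submodule k T} {C : T → Prop} {a : T}
    (ha : a ∈ ⨆ v ∈ A, f v) (h : ∀ v ∈ A, ∀ x ∈ f v, C x) (h0 : C 0)
    (hadd : ∀ x y, C x → C y → C (x + y)) : C a := by
  refine Submodule.iSup_induction (motive := C) (fun v => ⨆ _ : v ∈ A, f v) ha ?_ h0 hadd
  intro v x hx
  change x ∈ ⨆ _ : v ∈ A, f v at hx
  by_cases hv : v ∈ A
  · rw [iSup_pos hv] at hx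
    exact h v hv x hx
  · rw [iSup_neg hv] at hx
    simp only [Submodule.mem_bot] at hx
    subst hx; exact h0


lemma mul_mem_of_biSup {V : ι → Submodule k T} {A B : Set (List ι)} {S : Submodule k T}
    (h : ∀ v ∈ A, ∀ w ∈ B, Vword V (v ++ w) ≤ S) {a b : T}
    (ha : a ∈ ⨆ v ∈ A, Vword V v) (hb : b ∈ ⨆ w ∈ B, Vword V w) : a * b ∈ S := by
  refine biSup_ind (C := fun t => t * b ∈ S) ha (fun v hv x hx => ?_) (by simp [S.zero_mem]) ?_
  · refine biSup_ind (C := fun t => x * t ∈ S) hb (fun w hw y hy => ?_) (by simp [S.zero_mem]) ?_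
    · exact h v hv w hw ((Vword_append V v w) ▸ Submodule.mul_mem_mul hx hy)
    · intro y z hy hz
      rw [mul_add]; exact add_mem hy hz
  · intro y z hy hz
    rw [add_mul]; exact add_mem hy hz

lemma mul'_map_mem {V : ι → Submodule k T} (v w : List ι)
    (z : ↥(Vword V v) ⊗[k] ↥(Vword V w)) :
    LinearMap.mul' k T
      (TensorProduct.map (Vword V v).subtype (Vword V w).subtype z) ∈ Vword V (v ++ w) := by
  induction z with
  | zero => simp
  | tmul p q =>
      rw [TensorProduct.map_tmul, LinearMap.mul'_apply]
      exact (Vword_append V v w) ▸ Submodule.mul_mem_mul p.2 q.2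
  | add p q hp hq =>
      rw [map_add, map_add]
      exact add_mem hp hq

lemma cinv_mul_mem {V : ι → Submodule k T} {cinv : T ⊗[k] T →ₗ[k] T ⊗[k] T}
    (hc : BraidingCompat V cinv) {A B : Set (List ι)} {S : Submodule k T}
    (h : ∀ v ∈ A, ∀ w ∈ B, Vword V (w ++ v) ≤ S) {a b : T}
    (ha : a ∈ ⨆ v ∈ A, Vword V v) (hb : b ∈ ⨆ w ∈ B, Vword V w) :
    LinearMap.mul' k T (cinv (a ⊗ₜ[k] b)) ∈ S := by
  refine biSup_ind (C := fun t => LinearMap.mul' k T (cinv (t ⊗ₜ[k] b)) ∈ S) ha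
    (fun v hv x hx => ?_) (by simp [S.zero_mem]) ?_
  · refine biSup_ind (C := fun t => LinearMap.mul' k T (cinv (x ⊗ₜ[k] t)) ∈ S) hb
      (fun w hw y hy => ?_) (by simp [S.zero_mem]) ?_
    · have hmem : x ⊗ₜ[k] y ∈
          LinearMap.range (TensorProduct.map (Vword V v).subtype (Vword V w).subtype) :=
        ⟨(⟨x, hx⟩ : ↥(Vword V v)) ⊗ₜ (⟨y, hy⟩ : ↥(Vword V w)), rfl⟩
      obtain ⟨z, hz⟩ := hc v w _ hmem
      show LinearMap.mul' k T (cinv (x ⊗ₜ[k] y)) ∈ S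
      rw [← hz]
      exact h v hv w hw (mul'_map_mem w v z)
    · intro y z hy hz
      show LinearMap.mul' k T (cinv (x ⊗ₜ[k] (y + z))) ∈ S
      rw [TensorProduct.tmul_add, map_add, map_add]
      exact add_mem hy hz
  · intro y z hy hz
    show LinearMap.mul' k T (cinv ((y + z) ⊗ₜ[k] b)) ∈ S
    rw [TensorProduct.add_tmul, map_add, map_add]
    exact add_mem hy hz

lemma mem_biSupE {V : ι → Submodule k T} {t : List ι} {z : T} (hz : z ∈ Vword V t) :
    z ∈ ⨆ s ∈ {s : List ι | s.length = t.length ∧ t ≤ s}, Vword V s :=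
  Submodule.mem_iSup_of_mem t (Submodule.mem_iSup_of_mem ⟨rfl, le_refl t⟩ hz)

lemma biSup_strict_le (V : ι → Submodule k T) (t : List ι) :
    (⨆ s ∈ {s : List ι | s.length = t.length ∧ t < s}, Vword V s) ≤
      ⨆ s ∈ {s : List ι | s.length = t.length ∧ t ≤ s}, Vword V s :=
  iSup₂_le fun s hs => le_iSup₂_of_le s ⟨hs.1, le_of_lt hs.2⟩ le_rfl

lemma bracket_key {V : ι → Submodule k T} {cinv : T ⊗[k] T →ₗ[k] T ⊗[k] T}
    (hc : BraidingCompat V cinv) {Br : List ι → T →ₗ[k] T} (hBr : IsBracketing V cinv Br) :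
    ∀ n : ℕ, ∀ u : List ι, u.length ≤ n → u ≠ [] → ∀ x ∈ Vword V u,
      Br u x - x ∈ ⨆ w ∈ {w : List ι | w.length = u.length ∧ u < w}, Vword V w := by
  classical
  obtain ⟨hBr0, hBr1, hBr3, hBr4⟩ := hBr
  intro n
  induction n with
  | zero =>
      intro u hlen hne x _
      exact absurd (List.length_eq_zero_iff.mp (Nat.le_zero.mp hlen)) hne
  | succ n IH =>
    intro u hlen hne x hx
    set S := ⨆ w ∈ {w : List ι | w.length = u.length ∧ u < w}, Vword V w with hS
    have hmem : ∀ t : List ι, t.length = u.length → u < t → ∀ z ∈ Vword V t, z ∈ S :=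
      fun t h1 h2 z hz =>
        Submodule.mem_iSup_of_mem t (Submodule.mem_iSup_of_mem ⟨h1, h2⟩ hz)
    have hulen : 0 < u.length := List.length_pos_iff.mpr hne
    by_cases hone : u.length = 1
    · obtain ⟨a, rfl⟩ := List.length_eq_one_iff.mp hone
      have hx' : x ∈ V a := by simpa [Vword] using hx
      rw [hBr1 a x hx', sub_self]
      exact S.zero_mem
    · have hu2 : 2 ≤ u.length := by omega
      by_cases hLyn : IsLyndon u
      · -- Lyndon case: Shirshov decomposition
        set P : ℕ → Prop := fun m => 0 < m ∧ m < u.length ∧ IsLyndon (u.drop (u.length - m))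
          with hPdef
        have hP1 : P 1 := ⟨one_pos, by omega,
          isLyndon_of_length_one (by rw [List.length_drop]; omega)⟩
        set n₀ := Nat.findGreatest P u.length with hn₀def
        have hn₀ : P n₀ := Nat.findGreatest_spec (by omega) hP1
        obtain ⟨hn₀pos, hn₀lt, hwLyn⟩ := hn₀
        set w := u.drop (u.length - n₀) with hwdef
        set v := u.take (u.length - n₀) with hvdef
        have huvw : u = v ++ w := (List.take_append_drop _ u).symm
        have hwlen : w.length = n₀ := by rw [hwdef, List.length_drop]; omega
        have hvlen : v.length = u.length - n₀ := by rw [hvdef, List.length_take]; omega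
        have hvne : v ≠ [] := by
          intro hv; rw [hv] at hvlen; simp only [List.length_nil] at hvlen; omega
        have hwne : w ≠ [] := hwLyn.1
        have hmax : ∀ w' : List ι, w' <:+ u → w' ≠ u → IsLyndon w' → w'.length ≤ w.length := by
          intro w' hsuf hne' hLyn'
          obtain ⟨s, hs⟩ := hsuf
          have hsne : s ≠ [] := by rintro rfl; exact hne' (by simpa using hs)
          have hslen : 0 < s.length := List.length_pos_iff.mpr hsne
          have h2 : u.length = s.length + w'.length := by rw [← hs, List.length_append]
          have h3 : u.drop (u.length - w'.length) = w' := by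
            rw [show u.length - w'.length = s.length by omega, ← hs, List.drop_left]
          have hPw' : P w'.length :=
            ⟨List.length_pos_iff.mpr hLyn'.1, by omega, by rw [h3]; exact hLyn'⟩
          rw [hwlen]
          exact Nat.le_findGreatest (by omega) hPw'
        have hSh : ShirshovDecomp u v w := ⟨huvw, hvne, hwne, hwLyn, hmax⟩
        have hult : u < w := hLyn.2 v w hvne hwne huvw
        rw [huvw, Vword_append] at hx
        refine Submodule.mul_induction_on (C := fun z => Br u z - z ∈ S) hx ?_ ?_
        · intro p hp q hq
          have hbr := hBr3 u v w hLyn hSh p hp q hq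
          have hap : Br v p - p ∈ ⨆ s ∈ {s : List ι | s.length = v.length ∧ v < s}, Vword V s :=
            IH v (by omega) hvne p hp
          have hbq : Br w q - q ∈ ⨆ s ∈ {s : List ι | s.length = w.length ∧ w < s}, Vword V s :=
            IH w (by omega) hwne q hq
          have haE : Br v p ∈ ⨆ s ∈ {s : List ι | s.length = v.length ∧ v ≤ s}, Vword V s := by
            have h1 := add_mem (mem_biSupE hp) (biSup_strict_le V v hap)
            rwa [show p + (Br v p - p) = Br v p by abel] at h1
          have hbE : Br w q ∈ ⨆ s ∈ {s : List ι | s.length = w.length ∧ w ≤ s}, Vword V s := by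
            have h1 := add_mem (mem_biSupE hq) (biSup_strict_le V w hbq)
            rwa [show q + (Br w q - q) = Br w q by abel] at h1
          show Br u (p * q) - p * q ∈ S
          rw [hbr]
          simp only [LinearMap.sub_apply, LinearMap.coe_comp, Function.comp_apply,
            LinearMap.mul'_apply]
          have hsplit : Br v p * Br w q - LinearMap.mul' k T (cinv (Br v p ⊗ₜ[k] Br w q)) - p * q
              = (Br v p * (Br w q - q) + (Br v p - p) * q)
                - LinearMap.mul' k T (cinv (Br v p ⊗ₜ[k] Br w q)) := by
            rw [mul_sub, sub_mul]; abel
          rw [hsplit]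
          refine sub_mem (add_mem ?_ ?_) ?_
          · refine mul_mem_of_biSup ?_ haE hbq
            intro v' hv' w' hw' z hz
            refine hmem (v' ++ w') ?_ ?_ z hz
            · rw [List.length_append, huvw, List.length_append, hv'.1, hw'.1]
            · rw [huvw]
              rcases lt_or_eq_of_le hv'.2 with h | h
              · exact lex_append_of_lt h hv'.1.symm w w'
              · rw [← h]; exact lex_append_left hw'.2 v
          · refine mul_mem_of_biSup ?_ hap (mem_biSupE hq)
            intro v' hv' w' hw' z hz
            refine hmem (v' ++ w') ?_ ?_ z hz
            · rw [List.length_append, huvw, List.length_append, hv'.1, hw'.1]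
            · rw [huvw]
              exact lex_append_of_lt hv'.2 hv'.1.symm w w'
          · refine cinv_mul_mem hc ?_ haE hbE
            intro v' hv' w' hw' z hz
            refine hmem (w' ++ v') ?_ ?_ z hz
            · rw [List.length_append, huvw, List.length_append, hv'.1, hw'.1]; omega
            · have h1 : u < w' := lt_of_lt_of_le hult hw'.2
              refine lt_append_of_lt h1 ?_ v'
              rw [hw'.1, hwlen]; omega
        · intro y z hy hz
          have h1 : Br u (y + z) - (y + z) = (Br u y - y) + (Br u z - z) := by
            rw [map_add]; abel
          show Br u (y + z) - (y + z) ∈ S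
          rw [h1]; exact add_mem hy hz
      · -- non-Lyndon case: longest Lyndon prefix
        set P : ℕ → Prop := fun m => 0 < m ∧ IsLyndon (u.take m) with hPdef
        have hP1 : P 1 := ⟨one_pos, isLyndon_of_length_one (by rw [List.length_take]; omega)⟩
        set n₀ := Nat.findGreatest P u.length with hn₀def
        have hn₀ : P n₀ := Nat.findGreatest_spec (by omega) hP1
        obtain ⟨hn₀pos, hvLyn⟩ := hn₀
        have hn₀le : n₀ ≤ u.length := Nat.findGreatest_le _
        have hn₀lt : n₀ < u.length := by
          rcases lt_or_eq_of_le hn₀le with h | h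
          · exact h
          · rw [h, List.take_length] at hvLyn; exact absurd hvLyn hLyn
        set v := u.take n₀ with hvdef
        set w := u.drop n₀ with hwdef
        have huvw : u = v ++ w := (List.take_append_drop _ u).symm
        have hvlen : v.length = n₀ := by rw [hvdef, List.length_take]; omega
        have hwlen : w.length = u.length - n₀ := by rw [hwdef, List.length_drop]
        have hvne : v ≠ [] := hvLyn.1
        have hwne : w ≠ [] := by
          intro hw; rw [hw] at hwlen; simp only [List.length_nil] at hwlen; omega
        have hmax : ∀ v' : List ι, v' <+: u → IsLyndon v' → v'.length ≤ v.length := by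
          intro v' hpre hLyn'
          have h3 : v' = u.take v'.length := List.prefix_iff_eq_take.mp hpre
          have hPv' : P v'.length := ⟨List.length_pos_iff.mpr hLyn'.1, by rw [← h3]; exact hLyn'⟩
          rw [hvlen]
          exact Nat.le_findGreatest hpre.length_le hPv'
        rw [huvw, Vword_append] at hx
        refine Submodule.mul_induction_on (C := fun z => Br u z - z ∈ S) hx ?_ ?_
        · intro p hp q hq
          have hbr := hBr4 u v w huvw hvLyn hwne hmax p hp q hq
          have hap : Br v p - p ∈ ⨆ s ∈ {s : List ι | s.length = v.length ∧ v < s}, Vword V s :=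
            IH v (by omega) hvne p hp
          have hbq : Br w q - q ∈ ⨆ s ∈ {s : List ι | s.length = w.length ∧ w < s}, Vword V s :=
            IH w (by omega) hwne q hq
          have haE : Br v p ∈ ⨆ s ∈ {s : List ι | s.length = v.length ∧ v ≤ s}, Vword V s := by
            have h1 := add_mem (mem_biSupE hp) (biSup_strict_le V v hap)
            rwa [show p + (Br v p - p) = Br v p by abel] at h1
          show Br u (p * q) - p * q ∈ S
          rw [hbr]
          have hsplit : Br v p * Br w q - p * q
              = Br v p * (Br w q - q) + (Br v p - p) * q := by
            rw [mul_sub, sub_mul]; abel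
          rw [hsplit]
          refine add_mem ?_ ?_
          · refine mul_mem_of_biSup ?_ haE hbq
            intro v' hv' w' hw' z hz
            refine hmem (v' ++ w') ?_ ?_ z hz
            · rw [List.length_append, huvw, List.length_append, hv'.1, hw'.1]
            · rw [huvw]
              rcases lt_or_eq_of_le hv'.2 with h | h
              · exact lex_append_of_lt h hv'.1.symm w w'
              · rw [← h]; exact lex_append_left hw'.2 v
          · refine mul_mem_of_biSup ?_ hap (mem_biSupE hq)
            intro v' hv' w' hw' z hz
            refine hmem (v' ++ w') ?_ ?_ z hz
            · rw [List.length_append, huvw, List.length_append, hv'.1, hw'.1]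
            · rw [huvw]
              exact lex_append_of_lt hv'.2 hv'.1.symm w w'
        · intro y z hy hz
          have h1 : Br u (y + z) - (y + z) = (Br u y - y) + (Br u z - z) := by
            rw [map_add]; abel
          show Br u (y + z) - (y + z) ∈ S
          rw [h1]; exact add_mem hy hz


end AuxProof

/-- Let `u` be a Lyndon word and `x` a nonzero `u`-vector in `TV`.  Then the
iterated bracket `[x]` has `x` as its leading vector: `[x] − x` is a sum of `w`-vectors for
words `w` of the same length with `w > u` lexicographically. -/
theorem bracket_leading_vector {k T ι : Type*} [Field k] [Ring T] [Algebra k T]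
    [LinearOrder ι]
    (V : ι → Submodule k T) (cinv : T ⊗[k] T →ₗ[k] T ⊗[k] T)
    (hc : BraidingCompat V cinv)
    (Br : List ι → T →ₗ[k] T) (hBr : IsBracketing V cinv Br)
    (u : List ι) (hu : IsLyndon u)
    (x : T) (hx : x ∈ Vword V u) (hx0 : x ≠ 0) :
    Br u x - x ∈ ⨆ w ∈ {w : List ι | w.length = u.length ∧ u < w}, Vword V w :=
  bracket_key hc hBr u.length u le_rfl hu.1 x hx
end
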